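/- Let Y be a finite pure l-dimensional weighted simplicial complex, l ≥ 2, all of whose links of dimension ≥ 1 (including the 1-skeleton of Y itself) have connected 1-skeletons. Suppose −1 ≤ κ₁ ≤ 0 ≤ κ₂ ≤ 1/l are such that for every τ ∈ Y(l−2) the spectrum of the random walk operator A_τ on the link graph is contained in [κ₁, κ₂] ∪ {1}. Then the spectrum of the random walk operator on the 1-skeleton of Y is contained in [κ₁/(1−(l−1)κ₁), κ₂/(1−(l−1)κ₂)] ∪ {1}. -/

import Mathlib

noncomputable section

open scoped BigOperators Classical

/-- Simplices of `K` of cardinality `j` containing `σ`. -/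
def cofacesCard {V : Type} (K : Set (Finset V)) (σ : Finset V) (j : ℕ) :
    Set (Finset V) :=
  {η : Finset V | η ∈ K ∧ σ ⊆ η ∧ η.card = j}

/-- The standard weight of a pure `n`-dimensional weighted simplicial complex:
`m(σ) = 1` on top-dimensional simplices and
`m(τ) = Σ_{σ ⊃ τ, dim σ = dim τ + 1} m(σ)` below. -/
structure IsStdWeight {V : Type} (K : Set (Finset V)) (n : ℕ) (m : Finset V → ℝ) :
    Prop where
  top_eq : ∀ σ ∈ K, σ.card = n + 1 → m σ = 1
  rec_eq : ∀ τ, ∀ hτ : τ ∈ K, ∀ k : ℕ, k < n → τ.card = k + 1 →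
    ∀ h : (cofacesCard K τ (k + 2)).Finite, m τ = ∑ η ∈ h.toFinset, m η

/-- Vertex set of (the 1-skeleton of) the link of the simplex `t` (for `t = ∅`,
this is the vertex set of the 1-skeleton of the complex itself). -/
def linkVerts {V : Type} [DecidableEq V] (K : Set (Finset V)) (t : Finset V) :
    Set V :=
  {v : V | v ∉ t ∧ insert v t ∈ K}

/-- Edge weight `m_t({u,v}) = m(t ∪ {u,v})` of the 1-skeleton of the link of `t`
(zero when `{u,v}` is not an edge of the link). -/
def linkW {V : Type} [DecidableEq V] (K : Set (Finset V)) (m : Finset V → ℝ)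
    (t : Finset V) (u v : V) : ℝ :=
  if u ≠ v ∧ u ∉ t ∧ v ∉ t ∧ insert u (insert v t) ∈ K then
    m (insert u (insert v t)) else 0

/-- Vertex weight `m_t(v)` in the link of `t`. -/
def linkDeg {V : Type} [DecidableEq V] [Fintype V] (K : Set (Finset V))
    (m : Finset V → ℝ) (t : Finset V) (v : V) : ℝ :=
  ∑ u, linkW K m t v u

/-- `μ` belongs to the spectrum of the (weighted) random walk operator on the
1-skeleton of the link of `t`: there is a function, not vanishing identically on the
link, which is an eigenfunction with eigenvalue `μ`. -/
def IsLinkEigenvalue {V : Type} [DecidableEq V] [Fintype V] (K : Set (Finset V))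
    (m : Finset V → ℝ) (t : Finset V) (μ : ℝ) : Prop :=
  ∃ f : V → ℝ, (∃ v ∈ linkVerts K t, f v ≠ 0) ∧
    ∀ v ∈ linkVerts K t,
      (∑ u, linkW K m t v u / linkDeg K m t v * f u) = μ * f v

/-- The 1-skeleton of the link of `t`, as a simple graph on the link's vertex set. -/
def linkGraph {V : Type} [DecidableEq V] (K : Set (Finset V)) (m : Finset V → ℝ)
    (t : Finset V) : SimpleGraph (linkVerts K t) :=
  SimpleGraph.induce (linkVerts K t) (SimpleGraph.fromRel fun u v => linkW K m t u v ≠ 0)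

/-!
Garland's method, iterated down the dimension. Let `f` be an eigenfunction, with eigenvalue
`μ ≠ 1`, of the random walk on the link of `t`. In the link of each vertex `v` of that link, the
spectral gap hypothesis bounds the quadratic form of `f` minus its mean (a Rayleigh quotient
estimate, from the spectral theorem for the symmetrized walk). The edge weights of the links of
the vertices add up to those of the link of `t`, and the local means `(A f)(v) = μ f(v)` add up
to `μ² ‖f‖²`, so summing over `v` gives `a (1 - μ²) ≤ μ - μ² ≤ b (1 - μ²)`, that is
`μ ∈ [a / (1 - a), b / (1 - b)]`. Starting from the links of the `(l - 2)`-simplices, the map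
`x ↦ x / (1 - x)` sends `κ / (1 - j κ)` to `κ / (1 - (j + 1) κ)`, and `l - 1` steps reach the
1-skeleton.
-/

open scoped RealInnerProductSpace

theorem Fintype.sum_subtype_of_eq_zero {ι M : Type*} [Fintype ι] [AddCommMonoid M]
    {p : ι → Prop} [DecidablePred p] {f : ι → M} (hf : ∀ x, ¬p x → f x = 0) :
    ∑ x : Subtype p, f x = ∑ x, f x := by
  rw [← Fintype.sum_subtype_add_sum_subtype p f,
    Finset.sum_eq_zero fun (x : {x // ¬p x}) _ => hf x x.2, add_zero]

theorem SimpleGraph.Connected.eq_of_harmonic {S : Type*} [Fintype S] {G : SimpleGraph S}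
    (hG : G.Connected) {W : S → S → ℝ} (hW : ∀ u v, 0 ≤ W u v)
    (hadj : ∀ u v, G.Adj u v → W u v ≠ 0) {g : S → ℝ}
    (hg : ∀ v, ∑ u, W v u * g u = (∑ u, W v u) * g v) (u v : S) : g u = g v := by
  have := hG.nonempty
  obtain ⟨u₀, -, hmax⟩ := Finset.exists_max_image Finset.univ g Finset.univ_nonempty
  have hstep : ∀ p q, G.Adj p q → g p = g u₀ → g q = g u₀ := by
    intro p q hpq hp
    have hzero : ∑ x, W p x * (g u₀ - g x) = 0 := by
      simp only [mul_sub, Finset.sum_sub_distrib, hg, ← Finset.sum_mul, hp, sub_self]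
    have := (Finset.sum_eq_zero_iff_of_nonneg fun x _ =>
      mul_nonneg (hW p x) (sub_nonneg.2 (hmax x (Finset.mem_univ x)))).1 hzero q
      (Finset.mem_univ q)
    have := (mul_eq_zero.1 this).resolve_left (hadj p q hpq)
    linarith
  have hreach : ∀ p q, G.Reachable p q → g p = g u₀ → g q = g u₀ := by
    rintro p q ⟨w⟩
    induction w with
    | nil => exact id
    | cons h _ ih => exact fun hp => ih (hstep _ _ h hp)
  rw [hreach u₀ u (hG u₀ u) rfl, hreach u₀ v (hG u₀ v) rfl]

namespace LinearMap.IsSymmetric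

variable {E : Type*} [NormedAddCommGroup E] [InnerProductSpace ℝ E] [FiniteDimensional ℝ E]
  {T : E →ₗ[ℝ] E}

theorem inner_map_self_mem_Icc_of_mem_orthogonal (hT : T.IsSymmetric) {U : Submodule ℝ E}
    {a b : ℝ} (hev : ∀ (μ : ℝ) (x : E), x ≠ 0 → T x = μ • x → x ∈ U ∨ μ ∈ Set.Icc a b)
    {x : E} (hx : x ∈ Uᗮ) : ⟪T x, x⟫ ∈ Set.Icc (a * ‖x‖ ^ 2) (b * ‖x‖ ^ 2) := by
  set e := hT.eigenvectorBasis rfl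
  set μ := hT.eigenvalues rfl
  have hnorm : ‖x‖ ^ 2 = ∑ i, ⟪x, e i⟫ ^ 2 := by
    rw [← real_inner_self_eq_norm_sq, ← e.sum_inner_mul_inner x x]
    simp_rw [real_inner_comm x, sq]
  have hquad : ⟪T x, x⟫ = ∑ i, μ i * ⟪x, e i⟫ ^ 2 := by
    rw [← e.sum_inner_mul_inner]
    refine Finset.sum_congr rfl fun i _ => ?_
    rw [hT, hT.apply_eigenvectorBasis, RCLike.ofReal_real_eq_id, id_eq, real_inner_smul_right,
      real_inner_comm (e i)]
    ring
  have hterm : ∀ i, a * ⟪x, e i⟫ ^ 2 ≤ μ i * ⟪x, e i⟫ ^ 2 ∧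
      μ i * ⟪x, e i⟫ ^ 2 ≤ b * ⟪x, e i⟫ ^ 2 := by
    intro i
    rcases hev (μ i) (e i) (e.orthonormal.ne_zero i) (hT.apply_eigenvectorBasis rfl i)
      with hU | hμ
    · simp [Submodule.inner_left_of_mem_orthogonal hU hx]
    · exact ⟨by gcongr; exact hμ.1, by gcongr; exact hμ.2⟩
  rw [hquad, hnorm, Finset.mul_sum, Finset.mul_sum]
  exact ⟨Finset.sum_le_sum fun i _ => (hterm i).1, Finset.sum_le_sum fun i _ => (hterm i).2⟩

theorem inner_map_self_sub_mem_Icc (hT : T.IsSymmetric) {u : E} (hu : T u = u) {a b : ℝ}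
    (hev : ∀ (μ : ℝ) (x : E), x ≠ 0 → T x = μ • x → x ∈ ℝ ∙ u ∨ μ ∈ Set.Icc a b) (x : E) :
    ⟪T x, x⟫ - ⟪u, x⟫ ^ 2 / ‖u‖ ^ 2 ∈
      Set.Icc (a * (‖x‖ ^ 2 - ⟪u, x⟫ ^ 2 / ‖u‖ ^ 2)) (b * (‖x‖ ^ 2 - ⟪u, x⟫ ^ 2 / ‖u‖ ^ 2)) := by
  set c := ⟪u, x⟫ / ‖u‖ ^ 2
  set y := x - c • u
  have hy : y ∈ (ℝ ∙ u)ᗮ := by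
    have := (ℝ ∙ u).sub_starProjection_mem_orthogonal x
    rwa [Submodule.starProjection_singleton, RCLike.ofReal_real_eq_id, id_eq] at this
  have huy : ⟪u, y⟫ = 0 := Submodule.mem_orthogonal_singleton_iff_inner_right.1 hy
  have hTyu : ⟪T y, u⟫ = 0 := by rw [hT, hu, real_inner_comm, huy]
  have hx : x = y + c • u := by simp [y]
  have hux : ⟪u, x⟫ = c * ‖u‖ ^ 2 := by
    rw [hx, inner_add_right, huy, real_inner_smul_right, real_inner_self_eq_norm_sq, zero_add]
  have hsq : ⟪u, x⟫ ^ 2 / ‖u‖ ^ 2 = c ^ 2 * ‖u‖ ^ 2 := by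
    rw [show ⟪u, x⟫ ^ 2 / ‖u‖ ^ 2 = c * ⟪u, x⟫ by simp only [c]; ring, hux]; ring
  have hquad : ⟪T x, x⟫ - ⟪u, x⟫ ^ 2 / ‖u‖ ^ 2 = ⟪T y, y⟫ := by
    rw [hsq, hx, map_add, map_smul, hu, inner_add_left, inner_add_right, inner_add_right,
      real_inner_smul_right, real_inner_smul_left, real_inner_smul_left, real_inner_smul_right,
      hTyu, huy, real_inner_self_eq_norm_sq]
    ring
  have hnorm : ‖x‖ ^ 2 - ⟪u, x⟫ ^ 2 / ‖u‖ ^ 2 = ‖y‖ ^ 2 := by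
    rw [hsq, hx, ← real_inner_self_eq_norm_sq, inner_add_left, inner_add_right, inner_add_right,
      real_inner_smul_right, real_inner_smul_left, real_inner_smul_left, real_inner_smul_right,
      real_inner_comm u y, huy, real_inner_self_eq_norm_sq, real_inner_self_eq_norm_sq]
    ring
  rw [hquad, hnorm]
  exact hT.inner_map_self_mem_Icc_of_mem_orthogonal hev hy

end LinearMap.IsSymmetric

section SymmetrizedWalk

variable {S : Type*} [Fintype S] [DecidableEq S] {W : S → S → ℝ} {d : S → ℝ}

/-- `D^{-1/2} W D^{-1/2}`: conjugating the random walk `D^{-1} W` by `D^{1/2}` makes it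
symmetric. -/
def symmetrizedWalk (W : S → S → ℝ) (d : S → ℝ) :
    EuclideanSpace ℝ S →ₗ[ℝ] EuclideanSpace ℝ S :=
  Matrix.toEuclideanLin (Matrix.of fun v u => W v u / (√(d v) * √(d u)))

theorem isSymmetric_symmetrizedWalk (hsymm : ∀ u v, W u v = W v u) :
    (symmetrizedWalk W d).IsSymmetric :=
  Matrix.isSymmetric_toEuclideanLin_iff.2 <| by
    ext v u
    simp [Matrix.conjTranspose_apply, hsymm u v, mul_comm]

theorem symmetrizedWalk_apply_sqrt_mul (hdpos : ∀ v, 0 < d v) (g : S → ℝ) (v : S) :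
    symmetrizedWalk W d (WithLp.toLp 2 fun u => √(d u) * g u) v =
      (∑ u, W v u * g u) / √(d v) := by
  change ∑ u, W v u / (√(d v) * √(d u)) * (√(d u) * g u) = _
  rw [Finset.sum_div]
  refine Finset.sum_congr rfl fun u _ => ?_
  field_simp [(Real.sqrt_pos.2 (hdpos u)).ne']

theorem symmetrizedWalk_sqrt (hd : ∀ v, ∑ u, W v u = d v) (hdpos : ∀ v, 0 < d v) :
    symmetrizedWalk W d (WithLp.toLp 2 fun u => √(d u)) = WithLp.toLp 2 fun u => √(d u) := by
  ext v
  have := symmetrizedWalk_apply_sqrt_mul (W := W) hdpos 1 v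
  simp only [Pi.one_apply, mul_one] at this
  rw [this, hd, Real.div_sqrt]

theorem symmetrizedWalk_eigen (hdpos : ∀ v, 0 < d v) {μ : ℝ} {x : EuclideanSpace ℝ S}
    (hx : symmetrizedWalk W d x = μ • x) (v : S) :
    ∑ u, W v u * (x u / √(d u)) = μ * d v * (x v / √(d v)) := by
  have hr : ∀ v, √(d v) ≠ 0 := fun v => (Real.sqrt_pos.2 (hdpos v)).ne'
  have hxg : x = WithLp.toLp 2 fun u => √(d u) * (x u / √(d u)) := by
    ext u
    simp [mul_div_cancel₀ _ (hr u)]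
  have := symmetrizedWalk_apply_sqrt_mul (W := W) hdpos (fun u => x u / √(d u)) v
  rw [← hxg, hx, eq_div_iff (hr v)] at this
  rw [← this, PiLp.smul_apply, smul_eq_mul]
  field_simp [hr v]
  rw [Real.sq_sqrt (hdpos v).le]

end SymmetrizedWalk

theorem garland_inequality {S : Type*} [Fintype S] {W : S → S → ℝ} {d : S → ℝ}
    (hsymm : ∀ u v, W u v = W v u) (hd : ∀ v, ∑ u, W v u = d v) (hdpos : ∀ v, 0 < d v)
    {a b : ℝ}
    (heig : ∀ (μ : ℝ) (g : S → ℝ), g ≠ 0 → (∀ v, ∑ u, W v u * g u = μ * d v * g v) →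
      (∃ c, ∀ v, g v = c) ∨ μ ∈ Set.Icc a b)
    (f : S → ℝ) :
    ∑ v, ∑ u, W v u * f v * f u - (∑ v, d v * f v) ^ 2 / ∑ v, d v ∈
      Set.Icc (a * (∑ v, d v * f v ^ 2 - (∑ v, d v * f v) ^ 2 / ∑ v, d v))
        (b * (∑ v, d v * f v ^ 2 - (∑ v, d v * f v) ^ 2 / ∑ v, d v)) := by
  have hr : ∀ v, √(d v) ≠ 0 := fun v => (Real.sqrt_pos.2 (hdpos v)).ne'
  have hrr : ∀ v, √(d v) * √(d v) = d v := fun v => Real.mul_self_sqrt (hdpos v).le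
  have hinner : ∀ x y : EuclideanSpace ℝ S, ⟪x, y⟫ = ∑ v, x v * y v := fun x y => by
    simp [PiLp.inner_apply, mul_comm]
  have hnorm : ∀ g : S → ℝ, ‖(WithLp.toLp 2 fun v => √(d v) * g v : EuclideanSpace ℝ S)‖ ^ 2 =
      ∑ v, d v * g v ^ 2 := fun g => by
    rw [← real_inner_self_eq_norm_sq, hinner]
    exact Finset.sum_congr rfl fun v _ => by linear_combination g v ^ 2 * hrr v
  have hev : ∀ (μ : ℝ) (x : EuclideanSpace ℝ S), x ≠ 0 → symmetrizedWalk W d x = μ • x →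
      x ∈ ℝ ∙ (WithLp.toLp 2 fun u => √(d u)) ∨ μ ∈ Set.Icc a b := by
    refine fun μ x hx hTx => (heig μ _ (fun h => hx ?_) (symmetrizedWalk_eigen hdpos hTx)).imp
      (fun ⟨c, hc⟩ => Submodule.mem_span_singleton.2 ⟨c, ?_⟩) id <;>
    ext v
    · simpa [hr v] using congrFun h v
    · simp [← hc v, div_mul_cancel₀ _ (hr v)]
  have key := (isSymmetric_symmetrizedWalk hsymm).inner_map_self_sub_mem_Icc
    (symmetrizedWalk_sqrt hd hdpos) hev (WithLp.toLp 2 fun v => √(d v) * f v)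
  have hquad : ⟪symmetrizedWalk W d (WithLp.toLp 2 fun v => √(d v) * f v),
      WithLp.toLp 2 fun v => √(d v) * f v⟫ = ∑ v, ∑ u, W v u * f v * f u := by
    rw [hinner]
    refine Finset.sum_congr rfl fun v _ => ?_
    rw [symmetrizedWalk_apply_sqrt_mul hdpos, Finset.sum_div, Finset.sum_mul]
    refine Finset.sum_congr rfl fun u _ => ?_
    field_simp [hr v]
  have hmean : ⟪WithLp.toLp 2 fun u => √(d u), WithLp.toLp 2 fun v => √(d v) * f v⟫ =
      ∑ v, d v * f v := by
    rw [hinner]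
    exact Finset.sum_congr rfl fun v _ => by linear_combination f v * hrr v
  have hmass := hnorm 1
  simp only [Pi.one_apply, mul_one, one_pow] at hmass
  rwa [hquad, hmean, hnorm, hmass] at key

theorem mem_Icc_div_one_sub_of_mem_Icc {a b μ : ℝ} (ha : a ≤ 0) (hb : b < 1) (hμ : μ ≠ 1)
    (h : μ - μ ^ 2 ∈ Set.Icc (a * (1 - μ ^ 2)) (b * (1 - μ ^ 2))) :
    μ ∈ Set.Icc (a / (1 - a)) (b / (1 - b)) := by
  obtain ⟨h₁, h₂⟩ := h
  -- `h₁` reads `(1 - μ) * (μ - a * (1 + μ)) ≥ 0`, and the second factor is positive if `μ > 1`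
  have hμ1 : μ < 1 := by
    refine lt_of_le_of_ne (not_lt.1 fun hμ1 => ?_) hμ
    nlinarith [mul_pos (sub_pos.2 hμ1) (show 0 < μ - a * (1 + μ) by nlinarith)]
  constructor
  · rw [div_le_iff₀ (by linarith)]
    nlinarith
  · rw [le_div_iff₀ (by linarith)]
    nlinarith

theorem div_one_sub_div_one_sub_mul {κ x : ℝ} (h : 1 - x * κ ≠ 0) :
    κ / (1 - x * κ) / (1 - κ / (1 - x * κ)) = κ / (1 - (x + 1) * κ) := by
  rw [one_sub_div h, div_div_div_cancel_right₀ h]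
  ring_nf

section SimplicialComplex

variable {V : Type} {K : Set (Finset V)} {l : ℕ} {m : Finset V → ℝ}

def IsDownClosed (K : Set (Finset V)) : Prop :=
  ∀ σ ∈ K, ∀ τ : Finset V, τ ⊆ σ → τ.Nonempty → τ ∈ K

def IsPure (K : Set (Finset V)) (l : ℕ) : Prop :=
  ∀ σ ∈ K, ∃ η ∈ K, σ ⊆ η ∧ η.card = l + 1

def weightOn (K : Set (Finset V)) (m : Finset V → ℝ) (σ : Finset V) : ℝ :=
  if σ ∈ K then m σ else 0

theorem IsPure.card_le (hpure : IsPure K l) {σ : Finset V} (hσ : σ ∈ K) :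
    σ.card ≤ l + 1 := by
  obtain ⟨η, -, hση, hη⟩ := hpure σ hσ
  exact hη ▸ Finset.card_le_card hση

theorem mem_of_weightOn_ne_zero {σ : Finset V} (h : weightOn K m σ ≠ 0) : σ ∈ K := by
  by_contra hσ
  exact h (if_neg hσ)

variable [DecidableEq V]

theorem IsDownClosed.insert_mem (hK : IsDownClosed K) {σ : Finset V} {x : V}
    (h : insert x σ ∈ K) (hσ : σ.Nonempty) : σ ∈ K :=
  hK _ h σ (Finset.subset_insert x σ) hσ

theorem linkW_eq (t : Finset V) (u v : V) :
    linkW K m t u v =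
      if u ∈ t ∨ v ∈ insert u t then 0 else weightOn K m (insert v (insert u t)) := by
  simp only [linkW, weightOn, Finset.mem_insert, Finset.insert_comm v u]
  split_ifs <;> first | rfl | tauto

theorem linkW_symm (t : Finset V) (u v : V) : linkW K m t u v = linkW K m t v u := by
  simp only [linkW, Finset.insert_comm u v, ne_comm (a := u)]
  split_ifs <;> first | rfl | tauto

theorem mem_linkVerts_of_linkW_ne_zero (hK : IsDownClosed K) {t : Finset V} {u v : V}
    (h : linkW K m t u v ≠ 0) : u ∈ linkVerts K t := by
  rw [linkW_eq] at h
  split_ifs at h with hu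
  · exact absurd rfl h
  · exact ⟨fun hut => hu (Or.inl hut),
      hK.insert_mem (mem_of_weightOn_ne_zero h) (Finset.insert_nonempty u t)⟩

theorem linkW_eq_zero_of_notMem (hK : IsDownClosed K) {t : Finset V} {u : V}
    (hu : u ∉ linkVerts K t) (v : V) : linkW K m t u v = 0 :=
  by_contra fun h => hu (mem_linkVerts_of_linkW_ne_zero hK h)

theorem linkW_ne_zero_of_adj {s : Finset V} {x y : linkVerts K s}
    (h : (linkGraph K m s).Adj x y) : linkW K m s x y ≠ 0 := by
  have h' : (SimpleGraph.fromRel fun u v => linkW K m s u v ≠ 0).Adj x y := h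
  obtain ⟨-, h | h⟩ := SimpleGraph.fromRel_adj _ _ _ |>.1 h'
  exacts [h, by rwa [linkW_symm]]

variable [Fintype V]

theorem IsStdWeight.sum_weightOn_insert (hm : IsStdWeight K l m) (hK : IsDownClosed K)
    {σ : Finset V} (hσ : σ.Nonempty) (hcard : σ.card ≤ l) :
    ∑ x ∈ σᶜ, weightOn K m (insert x σ) = weightOn K m σ := by
  by_cases hσK : σ ∈ K
  · obtain ⟨k, hk⟩ : ∃ k, σ.card = k + 1 := ⟨σ.card - 1, by have := hσ.card_pos; omega⟩
    rw [weightOn, if_pos hσK, hm.rec_eq σ hσK k (by omega) hk (Set.toFinite _)]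
    simp only [weightOn]
    rw [← Finset.sum_filter, ← Finset.sum_image (g := (insert · σ))]
    · congr 1
      ext η
      simp only [Finset.mem_image, Finset.mem_filter, Finset.mem_compl, Set.Finite.mem_toFinset,
        cofacesCard, Set.mem_ofPred_eq]
      constructor
      · rintro ⟨x, ⟨hx, hxK⟩, rfl⟩
        exact ⟨hxK, Finset.subset_insert x σ, by rw [Finset.card_insert_of_notMem hx, hk]⟩
      · rintro ⟨hηK, hση, hη⟩
        obtain ⟨x, hx, rfl⟩ := Finset.exists_eq_insert_iff.2 ⟨hση, by omega⟩
        exact ⟨x, ⟨hx, hηK⟩, rfl⟩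
    · intro x hx y hy hxy
      simp only [Finset.coe_filter, Finset.mem_compl, Set.mem_ofPred_eq] at hx hy
      exact (Finset.insert_inj hx.1).1 hxy
  · rw [weightOn, if_neg hσK]
    refine Finset.sum_eq_zero fun x _ => ?_
    rw [weightOn, if_neg fun h => hσK (hK.insert_mem h hσ)]

theorem IsStdWeight.pos (hm : IsStdWeight K l m) (hK : IsDownClosed K) (hpure : IsPure K l)
    {σ : Finset V} (hσK : σ ∈ K) (hσ : σ.Nonempty) : 0 < m σ := by
  induction hn : l + 1 - σ.card generalizing σ with
  | zero => rw [hm.top_eq σ hσK (le_antisymm (hpure.card_le hσK) (by omega))]; exact one_pos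
  | succ n ih =>
    have hpos : ∀ x ∉ σ, insert x σ ∈ K → 0 < m (insert x σ) := fun x hx hxK =>
      ih hxK (Finset.insert_nonempty x σ) (by rw [Finset.card_insert_of_notMem hx]; omega)
    have hσm := hm.sum_weightOn_insert hK hσ (by omega)
    rw [weightOn, if_pos hσK] at hσm
    rw [← hσm]
    refine Finset.sum_pos' (fun x hx => ?_) ?_
    · unfold weightOn
      split_ifs with hxK
      exacts [(hpos x (Finset.mem_compl.1 hx) hxK).le, le_rfl]
    · obtain ⟨η, hηK, hση, hη⟩ := hpure σ hσK
      obtain ⟨x, hxη, hxσ⟩ := Finset.exists_of_ssubset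
        (Finset.ssubset_iff_subset_ne.2 ⟨hση, by rintro rfl; omega⟩)
      have hxK : insert x σ ∈ K :=
        hK η hηK _ (Finset.insert_subset hxη hση) (Finset.insert_nonempty x σ)
      exact ⟨x, Finset.mem_compl.2 hxσ, by rw [weightOn, if_pos hxK]; exact hpos x hxσ hxK⟩

theorem linkW_nonneg (hm : IsStdWeight K l m) (hK : IsDownClosed K) (hpure : IsPure K l)
    (t : Finset V) (u v : V) : 0 ≤ linkW K m t u v := by
  unfold linkW
  split_ifs with h
  exacts [(hm.pos hK hpure h.2.2.2 (Finset.insert_nonempty _ _)).le, le_rfl]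

theorem linkDeg_eq (hm : IsStdWeight K l m) (hK : IsDownClosed K) {t : Finset V}
    (hc : t.card + 1 ≤ l) (u : V) :
    linkDeg K m t u = if u ∈ t then 0 else weightOn K m (insert u t) := by
  unfold linkDeg
  simp_rw [linkW_eq]
  split_ifs with hu
  · simp [hu]
  · rw [← hm.sum_weightOn_insert hK (Finset.insert_nonempty u t)
      (by rw [Finset.card_insert_of_notMem hu]; omega)]
    simp only [hu, false_or]
    rw [Finset.sum_ite, Finset.sum_const_zero, zero_add]
    congr 1
    ext x
    simp

theorem linkDeg_eq_zero_of_notMem (hK : IsDownClosed K) {t : Finset V} {u : V}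
    (hu : u ∉ linkVerts K t) : linkDeg K m t u = 0 :=
  Finset.sum_eq_zero fun v _ => linkW_eq_zero_of_notMem hK hu v

theorem linkDeg_pos (hm : IsStdWeight K l m) (hK : IsDownClosed K) (hpure : IsPure K l)
    {t : Finset V} (hc : t.card + 1 ≤ l) {u : V} (hu : u ∈ linkVerts K t) :
    0 < linkDeg K m t u := by
  rw [linkDeg_eq hm hK hc, if_neg hu.1, weightOn, if_pos hu.2]
  exact hm.pos hK hpure hu.2 (Finset.insert_nonempty _ _)

theorem linkDeg_insert (hm : IsStdWeight K l m) (hK : IsDownClosed K) {t : Finset V} {v : V}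
    (hv : v ∉ t) (hc : t.card + 2 ≤ l) (u : V) :
    linkDeg K m (insert v t) u = linkW K m t v u := by
  rw [linkDeg_eq hm hK (by rw [Finset.card_insert_of_notMem hv]; omega), linkW_eq]
  simp [hv]

theorem sum_linkW_insert (hm : IsStdWeight K l m) (hK : IsDownClosed K) {t : Finset V}
    (hc : t.card + 2 ≤ l) (p q : V) :
    ∑ v ∈ Finset.univ.filter (· ∈ linkVerts K t), linkW K m (insert v t) p q =
      linkW K m t p q := by
  rw [Finset.sum_subset (s₂ := tᶜ) (fun v hv => Finset.mem_compl.2 (Finset.mem_filter.1 hv).2.1)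
    fun v hvt hv => by_contra fun h => hv (Finset.mem_filter.2 ⟨Finset.mem_univ v,
      Finset.mem_compl.1 hvt, hK.insert_mem (mem_linkVerts_of_linkW_ne_zero hK h).2
        (Finset.insert_nonempty v t)⟩)]
  simp_rw [linkW_eq]
  split_ifs with hpq
  · refine Finset.sum_eq_zero fun v _ => if_pos ?_
    simp only [Finset.mem_insert] at hpq ⊢
    tauto
  · push Not at hpq
    have hσ : (insert q (insert p t)).card ≤ l := by
      rw [Finset.card_insert_of_notMem hpq.2, Finset.card_insert_of_notMem hpq.1]; omega
    rw [← hm.sum_weightOn_insert hK (Finset.insert_nonempty _ _) hσ]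
    refine (Finset.sum_subset_zero_on_sdiff (Finset.compl_subset_compl.2 ?_) (fun v hv => ?_)
      fun v hv => ?_).symm
    · exact (Finset.subset_insert _ _).trans (Finset.subset_insert _ _)
    · simp only [Finset.mem_sdiff, Finset.mem_compl, Finset.mem_insert, not_not] at hv
      refine if_pos ?_
      simp only [Finset.mem_insert]
      tauto
    · simp only [Finset.mem_compl, Finset.mem_insert, not_or] at hv hpq
      rw [if_neg (by simp only [Finset.mem_insert]; tauto), Finset.insert_comm v q,
        Finset.insert_comm v p]

def linkSpectrum (K : Set (Finset V)) (m : Finset V → ℝ) (t : Finset V) : Set ℝ :=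
  {μ | IsLinkEigenvalue K m t μ}

theorem mem_linkSpectrum_of_eigen (hK : IsDownClosed K) {s : Finset V}
    (hd : ∀ v ∈ linkVerts K s, linkDeg K m s v ≠ 0) {μ : ℝ} {g : linkVerts K s → ℝ}
    (hg : g ≠ 0)
    (heig : ∀ v : linkVerts K s,
      ∑ u : linkVerts K s, linkW K m s v u * g u = μ * linkDeg K m s v * g v) :
    μ ∈ linkSpectrum K m s := by
  set g' : V → ℝ := fun x => if hx : x ∈ linkVerts K s then g ⟨x, hx⟩ else 0
  have hg' : ∀ x : linkVerts K s, g' x = g x := fun x => dif_pos x.2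
  obtain ⟨w, hw⟩ := Function.ne_iff.1 hg
  refine ⟨g', ⟨w, w.2, by rwa [hg']⟩, fun v hv => ?_⟩
  have hsum : ∑ u, linkW K m s v u * g' u = ∑ u : linkVerts K s, linkW K m s v u * g u := by
    rw [← Fintype.sum_subtype_of_eq_zero (p := (· ∈ linkVerts K s)) fun u hu => ?_]
    · simp only [hg']
    · rw [linkW_symm, linkW_eq_zero_of_notMem hK hu, zero_mul]
  simp_rw [div_mul_eq_mul_div, ← Finset.sum_div, hsum, heig ⟨v, hv⟩, hg' ⟨v, hv⟩]
  field_simp [hd v hv]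

theorem garland_inequality_link (hm : IsStdWeight K l m) (hK : IsDownClosed K)
    (hpure : IsPure K l) {s : Finset V} (hc : s.card + 1 ≤ l)
    (hconn : (linkGraph K m s).Connected) {a b : ℝ}
    (hspec : linkSpectrum K m s ⊆ Set.Icc a b ∪ {1}) (f : V → ℝ) :
    ∑ p, ∑ q, linkW K m s p q * f p * f q -
        (∑ x, linkDeg K m s x * f x) ^ 2 / ∑ x, linkDeg K m s x ∈
      Set.Icc (a * (∑ x, linkDeg K m s x * f x ^ 2 -
          (∑ x, linkDeg K m s x * f x) ^ 2 / ∑ x, linkDeg K m s x))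
        (b * (∑ x, linkDeg K m s x * f x ^ 2 -
          (∑ x, linkDeg K m s x * f x) ^ 2 / ∑ x, linkDeg K m s x)) := by
  have hsum : ∀ F : V → ℝ, (∀ x ∉ linkVerts K s, F x = 0) →
      ∑ x : linkVerts K s, F x = ∑ x, F x := fun F hF =>
    Fintype.sum_subtype_of_eq_zero (p := (· ∈ linkVerts K s)) hF
  have hd : ∀ x : linkVerts K s, ∑ y : linkVerts K s, linkW K m s x y = linkDeg K m s x :=
    fun x => hsum (linkW K m s x) fun y hy => by rw [linkW_symm, linkW_eq_zero_of_notMem hK hy]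
  have hdpos : ∀ x ∈ linkVerts K s, 0 < linkDeg K m s x := fun x => linkDeg_pos hm hK hpure hc
  have key := garland_inequality (W := fun x y : linkVerts K s => linkW K m s x y)
    (fun x y => linkW_symm s x y) hd (fun x => hdpos x x.2) (a := a) (b := b)
    (fun μ g hg heig => ?_) (fun x => f x)
  · have hdeg : ∀ F : V → ℝ, ∑ x : linkVerts K s, linkDeg K m s x * F x =
        ∑ x, linkDeg K m s x * F x := fun F =>
      hsum (fun x => linkDeg K m s x * F x) fun x hx => by
        rw [linkDeg_eq_zero_of_notMem hK hx, zero_mul]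
    have hquad : ∑ x : linkVerts K s, ∑ y : linkVerts K s, linkW K m s x y * f x * f y =
        ∑ p, ∑ q, linkW K m s p q * f p * f q := by
      rw [← hsum _ fun x hx => Finset.sum_eq_zero fun y _ => by
        rw [linkW_eq_zero_of_notMem hK hx, zero_mul, zero_mul]]
      refine Finset.sum_congr rfl fun x _ =>
        hsum (fun y => linkW K m s x y * f x * f y) fun y hy => ?_
      rw [linkW_symm, linkW_eq_zero_of_notMem hK hy, zero_mul, zero_mul]
    have hmass := hdeg 1
    simp only [Pi.one_apply, mul_one] at hmass
    simpa only [hdeg f, hdeg (f · ^ 2), hquad, hmass] using key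
  by_cases hμ : μ = 1
  · subst hμ
    obtain ⟨v₀⟩ := hconn.nonempty
    refine Or.inl ⟨g v₀, fun v => hconn.eq_of_harmonic (fun x y => linkW_nonneg hm hK hpure s x y)
      (fun x y => linkW_ne_zero_of_adj) (fun x => ?_) v v₀⟩
    rw [heig, hd, one_mul]
  · refine Or.inr ((hspec (mem_linkSpectrum_of_eigen hK (fun v hv => (hdpos v hv).ne') hg
      heig)).resolve_right hμ)

theorem garland_inequality_link_insert (hm : IsStdWeight K l m) (hK : IsDownClosed K)
    (hpure : IsPure K l) {t : Finset V} (hc : t.card + 2 ≤ l) {v : V} (hv : v ∈ linkVerts K t)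
    (hconn : (linkGraph K m (insert v t)).Connected) {a b : ℝ}
    (hspec : linkSpectrum K m (insert v t) ⊆ Set.Icc a b ∪ {1}) (f : V → ℝ) :
    ∑ p, ∑ q, linkW K m (insert v t) p q * f p * f q -
        (∑ x, linkW K m t v x * f x) ^ 2 / linkDeg K m t v ∈
      Set.Icc (a * (∑ x, linkW K m t v x * f x ^ 2 -
          (∑ x, linkW K m t v x * f x) ^ 2 / linkDeg K m t v))
        (b * (∑ x, linkW K m t v x * f x ^ 2 -
          (∑ x, linkW K m t v x * f x) ^ 2 / linkDeg K m t v)) := by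
  have := garland_inequality_link hm hK hpure
    (by rw [Finset.card_insert_of_notMem hv.1]; omega) hconn hspec f
  simp only [linkDeg_insert hm hK hv.1 hc] at this
  exact this

theorem sum_linkVerts_sum_linkW_mul (hK : IsDownClosed K) (t : Finset V) (F : V → ℝ) :
    ∑ v ∈ Finset.univ.filter (· ∈ linkVerts K t), ∑ x, linkW K m t v x * F x =
      ∑ x, linkDeg K m t x * F x := by
  rw [Finset.sum_filter_of_ne fun v _ h => by_contra fun hv => h <|
    Finset.sum_eq_zero fun x _ => by rw [linkW_eq_zero_of_notMem hK hv, zero_mul],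
    Finset.sum_comm]
  refine Finset.sum_congr rfl fun x _ => ?_
  simp_rw [← Finset.sum_mul, linkW_symm t _ x]
  rfl

theorem sum_linkVerts_sum_linkW_insert_mul (hm : IsStdWeight K l m) (hK : IsDownClosed K)
    {t : Finset V} (hc : t.card + 2 ≤ l) (f : V → ℝ) :
    ∑ v ∈ Finset.univ.filter (· ∈ linkVerts K t),
        ∑ p, ∑ q, linkW K m (insert v t) p q * f p * f q =
      ∑ p, ∑ q, linkW K m t p q * f p * f q := by
  simp_rw [← sum_linkW_insert hm hK hc, Finset.sum_mul]
  rw [Finset.sum_comm]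
  exact Finset.sum_congr rfl fun p _ => Finset.sum_comm

theorem linkSpectrum_subset_of_insert (hm : IsStdWeight K l m) (hK : IsDownClosed K)
    (hpure : IsPure K l) {t : Finset V} (hc : t.card + 2 ≤ l)
    (hconn : ∀ v ∈ linkVerts K t, (linkGraph K m (insert v t)).Connected) {a b : ℝ}
    (ha : a ≤ 0) (hb : b < 1)
    (hspec : ∀ v ∈ linkVerts K t, linkSpectrum K m (insert v t) ⊆ Set.Icc a b ∪ {1}) :
    linkSpectrum K m t ⊆ Set.Icc (a / (1 - a)) (b / (1 - b)) ∪ {1} := by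
  rintro μ ⟨f, ⟨v₀, hv₀, hfv₀⟩, heig⟩
  by_cases hμ : μ = 1
  · exact Or.inr hμ
  refine Or.inl (mem_Icc_div_one_sub_of_mem_Icc ha hb hμ ?_)
  have hdpos : ∀ v ∈ linkVerts K t, 0 < linkDeg K m t v := fun v =>
    linkDeg_pos hm hK hpure (by omega)
  replace heig : ∀ v ∈ linkVerts K t, ∑ u, linkW K m t v u * f u = μ * f v * linkDeg K m t v := by
    intro v hv
    have := heig v hv
    rwa [Finset.sum_congr rfl fun u _ => div_mul_eq_mul_div .., ← Finset.sum_div,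
      div_eq_iff (hdpos v hv).ne'] at this
  set N := ∑ v, linkDeg K m t v * f v ^ 2
  have hN : 0 < N := Finset.sum_pos'
    (fun v _ => mul_nonneg (Finset.sum_nonneg fun u _ => linkW_nonneg hm hK hpure t v u)
      (sq_nonneg _)) ⟨v₀, Finset.mem_univ _, mul_pos (hdpos v₀ hv₀) (by positivity)⟩
  have hvert : ∀ v ∈ Finset.univ.filter (· ∈ linkVerts K t),
      ∑ p, ∑ q, linkW K m (insert v t) p q * f p * f q - μ ^ 2 * (linkDeg K m t v * f v ^ 2) ∈
        Set.Icc (a * (∑ x, linkW K m t v x * f x ^ 2 - μ ^ 2 * (linkDeg K m t v * f v ^ 2)))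
          (b * (∑ x, linkW K m t v x * f x ^ 2 - μ ^ 2 * (linkDeg K m t v * f v ^ 2))) := by
    intro v hv
    replace hv := (Finset.mem_filter.1 hv).2
    have hmean : (∑ x, linkW K m t v x * f x) ^ 2 / linkDeg K m t v =
        μ ^ 2 * (linkDeg K m t v * f v ^ 2) := by
      rw [heig v hv]
      field_simp [(hdpos v hv).ne']
    simpa only [hmean] using
      garland_inequality_link_insert hm hK hpure hc hv (hconn v hv) (hspec v hv) f
  have hsumMean : ∑ v ∈ Finset.univ.filter (· ∈ linkVerts K t),
      μ ^ 2 * (linkDeg K m t v * f v ^ 2) = μ ^ 2 * N := by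
    rw [Finset.sum_filter_of_ne fun v _ h => by_contra fun hv => h <| by
      rw [linkDeg_eq_zero_of_notMem hK hv, zero_mul, mul_zero], Finset.mul_sum]
  have hsumQuad : ∑ p, ∑ q, linkW K m t p q * f p * f q = μ * N := by
    rw [Finset.mul_sum]
    refine Finset.sum_congr rfl fun p _ => ?_
    by_cases hp : p ∈ linkVerts K t
    · simp_rw [mul_right_comm _ (f p), ← Finset.sum_mul, heig p hp]
      ring
    · simp [linkW_eq_zero_of_notMem hK hp, linkDeg_eq_zero_of_notMem hK hp]
  have hlow := Finset.sum_le_sum fun v hv => (hvert v hv).1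
  have hup := Finset.sum_le_sum fun v hv => (hvert v hv).2
  simp only [← Finset.mul_sum, Finset.sum_sub_distrib, sum_linkVerts_sum_linkW_mul hK,
    sum_linkVerts_sum_linkW_insert_mul hm hK hc, hsumMean, hsumQuad] at hlow hup
  exact ⟨le_of_mul_le_mul_right (by linear_combination hlow) hN,
    le_of_mul_le_mul_right (by linear_combination hup) hN⟩

theorem linkSpectrum_subset_of_card_add (hm : IsStdWeight K l m) (hK : IsDownClosed K)
    (hpure : IsPure K l)
    (hconn : ∀ t : Finset V, (t = ∅ ∨ t ∈ K) → t.card ≤ l - 1 → (linkGraph K m t).Connected)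
    (hl : 2 ≤ l) {κ₁ κ₂ : ℝ} (h₁0 : κ₁ ≤ 0) (h₂ : κ₂ ≤ 1 / l)
    (hlinks : ∀ τ ∈ K, τ.card = l - 1 → linkSpectrum K m τ ⊆ Set.Icc κ₁ κ₂ ∪ {1}) (j : ℕ)
    {t : Finset V} (ht : t = ∅ ∨ t ∈ K) (hcard : t.card + j + 1 = l) :
    linkSpectrum K m t ⊆ Set.Icc (κ₁ / (1 - j * κ₁)) (κ₂ / (1 - j * κ₂)) ∪ {1} := by
  induction j generalizing t with
  | zero =>
    have htK : t ∈ K := ht.resolve_left fun h => by subst h; simp at hcard; omega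
    simpa using hlinks t htK (by omega)
  | succ j ih =>
    have hj : (j : ℝ) + 1 < l := by exact_mod_cast (by omega : j + 1 < l)
    have hκ₂ : ((j : ℝ) + 1) * κ₂ < 1 :=
      calc ((j : ℝ) + 1) * κ₂ ≤ ((j : ℝ) + 1) * (1 / l) := by gcongr
        _ < 1 := by rw [mul_one_div, div_lt_one (by linarith)]; exact hj
    have hpos₁ : 0 < 1 - j * κ₁ := by nlinarith [(j.cast_nonneg : (0 : ℝ) ≤ j)]
    have hpos₂ : 0 < 1 - j * κ₂ := by
      rcases le_or_gt κ₂ 0 with h | h <;> nlinarith [(j.cast_nonneg : (0 : ℝ) ≤ j)]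
    have := linkSpectrum_subset_of_insert hm hK hpure (t := t) (by omega)
      (fun v hv => hconn _ (Or.inr hv.2) (by rw [Finset.card_insert_of_notMem hv.1]; omega))
      (div_nonpos_of_nonpos_of_nonneg h₁0 hpos₁.le) ((div_lt_one hpos₂).2 (by linarith))
      fun v hv => ih (Or.inr hv.2) (by rw [Finset.card_insert_of_notMem hv.1]; omega)
    rwa [div_one_sub_div_one_sub_mul hpos₁.ne', div_one_sub_div_one_sub_mul hpos₂.ne',
      ← Nat.cast_succ] at this

end SimplicialComplex

theorem stmt18_general {V : Type} [DecidableEq V] [Fintype V] (K : Set (Finset V)) (l : ℕ)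
    (hl : 2 ≤ l)
    (hdown : ∀ σ ∈ K, ∀ τ : Finset V, τ ⊆ σ → τ.Nonempty → τ ∈ K)
    (hpure : ∀ σ ∈ K, ∃ η ∈ K, σ ⊆ η ∧ η.card = l + 1)
    (m : Finset V → ℝ) (hm : IsStdWeight K l m)
    (hconn : ∀ t : Finset V, (t = ∅ ∨ t ∈ K) → t.card ≤ l - 1 →
      (linkGraph K m t).Connected)
    (κ₁ κ₂ : ℝ) (h₁0 : κ₁ ≤ 0) (h₂ : κ₂ ≤ 1 / l)
    (hlinks : ∀ τ ∈ K, τ.card = l - 1 → ∀ μ : ℝ,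
      IsLinkEigenvalue K m τ μ → μ ∈ Set.Icc κ₁ κ₂ ∪ {1}) :
    ∀ μ : ℝ, IsLinkEigenvalue K m ∅ μ →
      μ ∈ Set.Icc (κ₁ / (1 - (l - 1 : ℝ) * κ₁)) (κ₂ / (1 - (l - 1 : ℝ) * κ₂)) ∪ {1} := by
  have := linkSpectrum_subset_of_card_add hm hdown hpure hconn hl h₁0 h₂ hlinks (l - 1)
    (Or.inl rfl) (by simp; omega)
  rwa [Nat.cast_sub (by omega), Nat.cast_one] at this

/-- spectral descent.  Let `Y` be a finite pure `l`-dimensional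
weighted simplicial complex, `l ≥ 2`, all of whose links of dimension `≥ 1`
(including `Y` itself) have connected 1-skeletons.  If `−1 ≤ κ₁ ≤ 0 ≤ κ₂ ≤ 1/l` and
for every `τ ∈ Y(l−2)` the spectrum of the random walk on the link of `τ` lies in
`[κ₁,κ₂] ∪ {1}`, then the spectrum of the random walk on the 1-skeleton of `Y` lies
in `[κ₁/(1−(l−1)κ₁), κ₂/(1−(l−1)κ₂)] ∪ {1}`. -/
theorem stmt18 {V : Type} [DecidableEq V] [Fintype V] (K : Set (Finset V)) (l : ℕ)
    (hl : 2 ≤ l)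
    (hdown : ∀ σ ∈ K, ∀ τ : Finset V, τ ⊆ σ → τ.Nonempty → τ ∈ K)
    (hpure : ∀ σ ∈ K, ∃ η ∈ K, σ ⊆ η ∧ η.card = l + 1)
    (m : Finset V → ℝ) (hm : IsStdWeight K l m)
    (hconn : ∀ t : Finset V, (t = ∅ ∨ t ∈ K) → t.card ≤ l - 1 →
      (linkGraph K m t).Connected)
    (κ₁ κ₂ : ℝ) (h₁ : -1 ≤ κ₁) (h₁0 : κ₁ ≤ 0) (h₂0 : 0 ≤ κ₂) (h₂ : κ₂ ≤ 1 / l)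
    (hlinks : ∀ τ ∈ K, τ.card = l - 1 → ∀ μ : ℝ,
      IsLinkEigenvalue K m τ μ → μ ∈ Set.Icc κ₁ κ₂ ∪ {1}) :
    ∀ μ : ℝ, IsLinkEigenvalue K m ∅ μ →
      μ ∈ Set.Icc (κ₁ / (1 - (l - 1 : ℝ) * κ₁)) (κ₂ / (1 - (l - 1 : ℝ) * κ₂)) ∪ {1} :=
  stmt18_general K l hl hdown hpure m hm hconn κ₁ κ₂ h₁0 h₂ hlinks
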